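/- For complex a and complex x with |x| < 1, ((1 + √(1-x))/2)^{1-2a} equals the Gauss hypergeometric series ₂F₁(a - 1/2, a; 2a; x) = ∑_{n=0}^∞ ((a-1/2)_n (a)_n / ((2a)_n n!)) x^n, where √ denotes the principal branch and 2a is not a nonpositive integer. -/

import Mathlib

open Complex

/-- Pochhammer symbol `(a)_n = a (a+1) ⋯ (a+n-1)`. -/
noncomputable def poch (a : ℂ) (n : ℕ) : ℂ := ∏ k ∈ Finset.range n, (a + k)

/-- `z` is not a nonpositive integer. -/
def NotNonposInt (z : ℂ) : Prop := ∀ n : ℕ, z ≠ -(n : ℂ)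

/-- `(1 + √(1-x))/2`, principal square root. -/
noncomputable def sfun (x : ℂ) : ℂ := (1 + (1 - x) ^ ((1:ℂ)/2)) / 2

/-- `x / (1+√(1-x))²`, principal square root. -/
noncomputable def zfun (x : ℂ) : ℂ := x / (1 + (1 - x) ^ ((1:ℂ)/2)) ^ 2

noncomputable def F21 (a b c x : ℂ) : ℂ :=
  ∑' n : ℕ, poch a n * poch b n / (poch c n * n.factorial) * x ^ n

noncomputable def F32 (a1 a2 a3 b1 b2 x : ℂ) : ℂ :=
  ∑' n : ℕ, poch a1 n * poch a2 n * poch a3 n / (poch b1 n * poch b2 n * n.factorial) * x ^ n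

noncomputable def F43 (a1 a2 a3 a4 b1 b2 b3 x : ℂ) : ℂ :=
  ∑' n : ℕ, poch a1 n * poch a2 n * poch a3 n * poch a4 n /
    (poch b1 n * poch b2 n * poch b3 n * n.factorial) * x ^ n

noncomputable def F54 (a1 a2 a3 a4 a5 b1 b2 b3 b4 x : ℂ) : ℂ :=
  ∑' n : ℕ, poch a1 n * poch a2 n * poch a3 n * poch a4 n * poch a5 n /
    (poch b1 n * poch b2 n * poch b3 n * poch b4 n * n.factorial) * x ^ n

/-! Writing `u = √(1 - x)`, the function `g = ((1 + u) / 2) ^ (1 - 2a)` has logarithmic derivative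
`-(1 - 2a) / (2u(1 + u))`, and with `x = 1 - u²` this turns the hypergeometric equation
`x(1 - x) g'' + (2a - (2a + 1/2) x) g' - (a - 1/2) a g = 0` into a rational identity in `u`.
For a solution holomorphic on the unit disc, its Taylor coefficients `c n` at `0` satisfy
`(n + 1)(n + 2a) c (n+1) = (n + a - 1/2)(n + a) c n`; as `2a` is not a nonpositive integer this
forces `c n = g 0 * (a - 1/2)ₙ (a)ₙ / ((2a)ₙ n!)`, and `g 0 = 1`. -/

open Metric
open scoped Nat

noncomputable def taylorCoeff (f : ℂ → ℂ) (n : ℕ) : ℂ := iteratedDeriv n f 0 / n !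

lemma taylorCoeff_deriv (f : ℂ → ℂ) (n : ℕ) :
    taylorCoeff (deriv f) n = (n + 1) * taylorCoeff f (n + 1) := by
  have hn : (n ! : ℂ) ≠ 0 := by exact_mod_cast n.factorial_ne_zero
  rw [taylorCoeff, taylorCoeff, ← iteratedDeriv_succ', Nat.factorial_succ]
  push_cast
  field_simp

lemma hasSum_taylorCoeff {f : ℂ → ℂ} {r : ℝ} (hf : DifferentiableOn ℂ f (ball 0 r)) {z : ℂ}
    (hz : z ∈ ball 0 r) : HasSum (fun n ↦ taylorCoeff f n * z ^ n) (f z) := by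
  refine (Complex.hasSum_taylorSeries_on_ball hf hz).congr_fun fun n ↦ ?_
  rw [taylorCoeff, sub_zero, smul_eq_mul, smul_eq_mul]
  ring

lemma HasSum.mul_left_shift {R : Type*} [CommRing R] [TopologicalSpace R] [IsTopologicalRing R]
    {c : ℕ → R} {z s : R} (h : HasSum (fun n ↦ c (n + 1) * z ^ n) s) (hc : c 0 = 0) :
    HasSum (fun n ↦ c n * z ^ n) (z * s) := by
  refine (hasSum_nat_add_iff' 1).mp ?_
  rw [Finset.sum_range_one, hc, zero_mul, sub_zero]
  have hz := h.mul_left z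
  rwa [show (fun n ↦ z * (c (n + 1) * z ^ n)) = fun n ↦ c (n + 1) * z ^ (n + 1) from
    funext fun n ↦ by ring] at hz

lemma eq_zero_of_forall_hasSum_pow_zero {c : ℕ → ℂ} {r : ℝ} (hr : 0 < r)
    (h : ∀ z ∈ ball (0 : ℂ) r, HasSum (fun n ↦ c n * z ^ n) 0) : c = 0 := by
  have hr2 : (0 : ℝ) < r / 2 := half_pos hr
  have hp : HasFPowerSeriesOnBall 0 (FormalMultilinearSeries.ofScalars ℂ c) 0
      (ENNReal.ofReal (r / 2)) := by
    refine ⟨?_, by simpa using hr2, fun {y} hy ↦ ?_⟩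
    · rw [ENNReal.ofReal_eq_coe_nnreal hr2.le]
      refine FormalMultilinearSeries.le_radius_of_tendsto _ (l := 0) ?_
      have hs := (h ((r / 2 : ℝ) : ℂ) (by simp [abs_of_pos hr, hr])).summable
      simpa [Complex.norm_of_nonneg hr2.le, abs_of_pos hr] using hs.norm.tendsto_atTop_zero
    · rw [Metric.mem_eball, edist_dist, dist_zero_right, ENNReal.ofReal_lt_ofReal_iff hr2] at hy
      have hy' : y ∈ ball (0 : ℂ) r := mem_ball_zero_iff.mpr (by linarith)
      simpa [FormalMultilinearSeries.ofScalars_apply_eq, mul_comm] using h y hy'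
  funext n
  exact (FormalMultilinearSeries.ofScalars_eq_zero ℂ n).mp
    (by rw [hp.hasFPowerSeriesAt.eq_zero]; rfl)

theorem taylorCoeff_succ_of_hypergeometric_ode {f : ℂ → ℂ} {α β γ : ℂ} {r : ℝ} (hr : 0 < r)
    (hf : DifferentiableOn ℂ f (ball 0 r))
    (hode : ∀ z ∈ ball (0 : ℂ) r, z * (1 - z) * deriv (deriv f) z
      + (γ - (α + β + 1) * z) * deriv f z - α * β * f z = 0) (n : ℕ) :
    (n + 1) * (n + γ) * taylorCoeff f (n + 1) = (n + α) * (n + β) * taylorCoeff f n := by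
  set t := taylorCoeff f
  suffices h : (fun n : ℕ ↦ (n + 1) * (n + γ) * t (n + 1) - (n + α) * (n + β) * t n) = 0 from
    sub_eq_zero.mp (congr_fun h n)
  refine eq_zero_of_forall_hasSum_pow_zero hr fun z hz ↦ ?_
  have hf' := hf.deriv isOpen_ball
  have h0 : HasSum (fun n ↦ t n * z ^ n) (f z) := hasSum_taylorCoeff hf hz
  have h1 : HasSum (fun n ↦ (n + 1) * t (n + 1) * z ^ n) (deriv f z) := by
    simpa only [taylorCoeff_deriv] using hasSum_taylorCoeff hf' hz
  have h2 : HasSum (fun n ↦ (n + 1) * ((n + 1 + 1) * t (n + 1 + 1)) * z ^ n)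
      (deriv (deriv f) z) := by
    simpa only [taylorCoeff_deriv, Nat.cast_add, Nat.cast_one]
      using hasSum_taylorCoeff (hf'.deriv isOpen_ball) hz
  have hzf'' : HasSum (fun n ↦ n * ((n + 1) * t (n + 1)) * z ^ n) (z * deriv (deriv f) z) :=
    HasSum.mul_left_shift (h2.congr_fun fun n ↦ by push_cast; ring) (by simp)
  have hzEuler : HasSum (fun n ↦ n * (n + α + β) * t n * z ^ n)
      (z * (z * deriv (deriv f) z + (α + β + 1) * deriv f z)) :=
    HasSum.mul_left_shift ((hzf''.add (h1.mul_left (α + β + 1))).congr_fun fun n ↦ by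
      push_cast; ring) (by simp)
  have hsum := (hzf''.add (h1.mul_left γ)).sub (hzEuler.add (h0.mul_left (α * β)))
  rw [show z * deriv (deriv f) z + γ * deriv f z - (z * (z * deriv (deriv f) z
      + (α + β + 1) * deriv f z) + α * β * f z) = 0 by linear_combination hode z hz] at hsum
  exact hsum.congr_fun fun n ↦ by ring

lemma poch_succ (a : ℂ) (n : ℕ) : poch a (n + 1) = poch a n * (a + n) :=
  Finset.prod_range_succ _ _

lemma NotNonposInt.add_natCast_ne_zero {γ : ℂ} (hγ : NotNonposInt γ) (n : ℕ) : γ + n ≠ 0 :=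
  fun h ↦ hγ n (eq_neg_of_add_eq_zero_left h)

lemma poch_ne_zero {γ : ℂ} (hγ : NotNonposInt γ) (n : ℕ) : poch γ n ≠ 0 :=
  Finset.prod_ne_zero_iff.mpr fun k _ ↦ hγ.add_natCast_ne_zero k

theorem taylorCoeff_eq_of_hypergeometric_ode {f : ℂ → ℂ} {α β γ : ℂ} {r : ℝ} (hr : 0 < r)
    (hγ : NotNonposInt γ) (hf : DifferentiableOn ℂ f (ball 0 r))
    (hode : ∀ z ∈ ball (0 : ℂ) r, z * (1 - z) * deriv (deriv f) z
      + (γ - (α + β + 1) * z) * deriv f z - α * β * f z = 0) (n : ℕ) :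
    taylorCoeff f n = f 0 * (poch α n * poch β n / (poch γ n * n !)) := by
  induction n with
  | zero => simp [taylorCoeff, poch]
  | succ n ih =>
    have hrec := taylorCoeff_succ_of_hypergeometric_ode hr hf hode n
    have hγn := hγ.add_natCast_ne_zero n
    have hn : ((n : ℂ) + 1) * (n + γ) ≠ 0 :=
      mul_ne_zero (by exact_mod_cast n.succ_ne_zero) (by rwa [add_comm])
    have hpγ := poch_ne_zero hγ n
    have hfac : (n ! : ℂ) ≠ 0 := by exact_mod_cast n.factorial_ne_zero
    apply mul_left_cancel₀ hn
    rw [hrec, ih, poch_succ, poch_succ, poch_succ, Nat.factorial_succ]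
    push_cast
    field_simp
    ring

theorem eq_mul_F21_of_hypergeometric_ode {f : ℂ → ℂ} {α β γ : ℂ} {r : ℝ} (hr : 0 < r)
    (hγ : NotNonposInt γ) (hf : DifferentiableOn ℂ f (ball 0 r))
    (hode : ∀ z ∈ ball (0 : ℂ) r, z * (1 - z) * deriv (deriv f) z
      + (γ - (α + β + 1) * z) * deriv f z - α * β * f z = 0) {z : ℂ} (hz : z ∈ ball 0 r) :
    f z = f 0 * F21 α β γ z := by
  have h := hasSum_taylorCoeff hf hz
  simp only [taylorCoeff_eq_of_hypergeometric_ode hr hγ hf hode, mul_assoc] at h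
  rw [← h.tsum_eq, tsum_mul_left, F21]

noncomputable def sqrtOneSub (z : ℂ) : ℂ := (1 - z) ^ ((1 : ℂ) / 2)

lemma sqrtOneSub_sq (z : ℂ) : sqrtOneSub z ^ 2 = 1 - z := by
  rw [sqrtOneSub, one_div]
  exact Complex.cpow_ofNat_inv_pow _ 2

lemma sfun_eq (z : ℂ) : sfun z = (1 + sqrtOneSub z) / 2 := rfl

section HalfPlane

variable {z : ℂ} (hz : z.re < 1)
include hz

lemma one_sub_mem_slitPlane : 1 - z ∈ Complex.slitPlane :=
  Or.inl (by simpa using hz)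

lemma re_sqrtOneSub_pos : 0 < (sqrtOneSub z).re := by
  rw [sqrtOneSub, one_div, Complex.cpow_inv_two_re]
  apply Real.sqrt_pos.mpr
  have : 0 < (1 - z).re := by simpa using hz
  linarith [norm_nonneg (1 - z)]

lemma sqrtOneSub_ne_zero : sqrtOneSub z ≠ 0 := fun h ↦ by
  simpa [h] using re_sqrtOneSub_pos hz

lemma one_add_sqrtOneSub_ne_zero : 1 + sqrtOneSub z ≠ 0 := fun h ↦ by
  have := congr_arg Complex.re h
  simp only [Complex.add_re, Complex.one_re, Complex.zero_re] at this
  linarith [re_sqrtOneSub_pos hz]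

lemma sfun_mem_slitPlane : sfun z ∈ Complex.slitPlane := by
  refine Or.inl ?_
  have : (sfun z).re = (1 + (sqrtOneSub z).re) / 2 := by simp [sfun_eq]
  linarith [re_sqrtOneSub_pos hz]

lemma hasDerivAt_sqrtOneSub : HasDerivAt sqrtOneSub (-1 / (2 * sqrtOneSub z)) z := by
  have h1z : 1 - z ≠ 0 := Complex.slitPlane_ne_zero (one_sub_mem_slitPlane hz)
  have hu := sqrtOneSub_ne_zero hz
  refine (((hasDerivAt_id z).const_sub 1).cpow_const (one_sub_mem_slitPlane hz)).congr_deriv ?_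
  rw [id, Complex.cpow_sub _ _ h1z, Complex.cpow_one, ← sqrtOneSub, ← sqrtOneSub_sq z]
  field_simp

lemma hasDerivAt_sfun : HasDerivAt sfun (-1 / (4 * sqrtOneSub z)) z :=
  (((hasDerivAt_sqrtOneSub hz).const_add 1).div_const 2).congr_deriv (by ring)

lemma hasDerivAt_sfun_cpow (k : ℂ) :
    HasDerivAt (fun w ↦ sfun w ^ k)
      (-k / (2 * sqrtOneSub z * (1 + sqrtOneSub z)) * sfun z ^ k) z := by
  have hs : sfun z ≠ 0 := Complex.slitPlane_ne_zero (sfun_mem_slitPlane hz)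
  have hu := sqrtOneSub_ne_zero hz
  have hu1 := one_add_sqrtOneSub_ne_zero hz
  refine ((hasDerivAt_sfun hz).cpow_const (sfun_mem_slitPlane hz)).congr_deriv ?_
  rw [Complex.cpow_sub _ _ hs, Complex.cpow_one]
  generalize sfun z ^ k = P
  rw [sfun_eq]
  field_simp
  ring

lemma hasDerivAt_logDeriv_sfun_cpow (k : ℂ) :
    HasDerivAt (fun w ↦ -k / (2 * sqrtOneSub w * (1 + sqrtOneSub w)))
      (-k * (1 + 2 * sqrtOneSub z) / (4 * sqrtOneSub z ^ 3 * (1 + sqrtOneSub z) ^ 2)) z := by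
  have hu := sqrtOneSub_ne_zero hz
  have hu1 := one_add_sqrtOneSub_ne_zero hz
  have hD :=
    ((hasDerivAt_sqrtOneSub hz).const_mul 2).fun_mul ((hasDerivAt_sqrtOneSub hz).const_add 1)
  refine ((hasDerivAt_const z (-k)).div hD (by simp [hu, hu1])).congr_deriv ?_
  field_simp
  ring

end HalfPlane

lemma sfun_cpow_hypergeometric_ode (a : ℂ) {z : ℂ} (hz : z.re < 1) :
    z * (1 - z) * deriv (deriv fun w ↦ sfun w ^ (1 - 2 * a)) z
      + (2 * a - (a - 1 / 2 + a + 1) * z) * deriv (fun w ↦ sfun w ^ (1 - 2 * a)) z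
      - (a - 1 / 2) * a * sfun z ^ (1 - 2 * a) = 0 := by
  set q := fun w ↦ -(1 - 2 * a) / (2 * sqrtOneSub w * (1 + sqrtOneSub w))
  have hderiv : deriv (fun w ↦ sfun w ^ (1 - 2 * a)) =ᶠ[nhds z]
      fun w ↦ q w * sfun w ^ (1 - 2 * a) := by
    filter_upwards [(Complex.isOpen_re_lt 1).mem_nhds hz] with w hw
    exact (hasDerivAt_sfun_cpow hw _).deriv
  rw [hderiv.deriv_eq, hderiv.eq_of_nhds,
    ((hasDerivAt_logDeriv_sfun_cpow hz _).fun_mul (hasDerivAt_sfun_cpow hz _)).deriv]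
  have hu := sqrtOneSub_ne_zero hz
  have hu1 := one_add_sqrtOneSub_ne_zero hz
  have hz' : z = 1 - sqrtOneSub z ^ 2 := by rw [sqrtOneSub_sq]; ring
  generalize sfun z ^ (1 - 2 * a) = P
  simp only [q]
  generalize sqrtOneSub z = u at hu hu1 hz'
  subst hz'
  field_simp
  ring

theorem sqrt_power_eq_hyp (a x : ℂ) (hx : ‖x‖ < 1) (h2a : NotNonposInt (2 * a)) :
    sfun x ^ (1 - 2 * a) =
      ∑' n : ℕ, poch (a - 1/2) n * poch a n / (poch (2 * a) n * n.factorial) * x ^ n := by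
  have hre {z : ℂ} (hz : z ∈ ball (0 : ℂ) 1) : z.re < 1 :=
    (Complex.re_le_norm z).trans_lt (mem_ball_zero_iff.mp hz)
  have hdiff : DifferentiableOn ℂ (fun w ↦ sfun w ^ (1 - 2 * a)) (ball 0 1) := fun z hz ↦
    (hasDerivAt_sfun_cpow (hre hz) _).differentiableAt.differentiableWithinAt
  have h := eq_mul_F21_of_hypergeometric_ode one_pos h2a hdiff
    (fun z hz ↦ sfun_cpow_hypergeometric_ode a (hre hz)) (mem_ball_zero_iff.mpr hx)
  have hs0 : sfun 0 = 1 := by norm_num [sfun]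
  rwa [hs0, Complex.one_cpow, one_mul] at h
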